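/- For nonempty regular families ℱ and 𝒢 of finite subsets of ℕ, the family ℱ[𝒢] = {∅} ∪ {E₁ ∪ ⋯ ∪ Eₙ : ∅ ≠ Eᵢ ∈ 𝒢, E₁ < ⋯ < Eₙ, (min E₁, …, min Eₙ) ∈ ℱ} is regular; moreover if CB(ℱ) = β+1 and CB(𝒢) = α+1 then CB(ℱ[𝒢]) = α·β + 1. -/

import Mathlib

/-- Identify a finite subset of `ℕ` with a point of the Cantor space `ℕ → Bool`. -/
def toCantor (F : Finset ℕ) : ℕ → Bool := fun n => decide (n ∈ F)

/-- Hereditary: closed under subsets. -/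
def Hereditary (G : Set (Finset ℕ)) : Prop := ∀ ⦃E F : Finset ℕ⦄, E ⊆ F → F ∈ G → E ∈ G

/-- Spreading: closed under replacing elements by larger ones, keeping the
increasing order and the cardinality. -/
def Spreading (G : Set (Finset ℕ)) : Prop :=
  ∀ (E : Finset ℕ) (f : ℕ → ℕ), StrictMonoOn f ↑E → (∀ n ∈ E, n ≤ f n) →
    E ∈ G → E.image f ∈ G

/-- Regular: compact (in the Cantor topology), hereditary and spreading. -/
def IsRegularFam (G : Set (Finset ℕ)) : Prop :=
  IsCompact (toCantor '' G) ∧ Hereditary G ∧ Spreading G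

/-- The Cantor–Bendixson derivative. -/
def cbDeriv {α : Type*} [TopologicalSpace α] (K : Set α) : Set α :=
  {x | x ∈ K ∧ x ∈ closure (K \ {x})}

/-- Transfinite Cantor–Bendixson iterates. -/
noncomputable def cbIter {α : Type*} [TopologicalSpace α] (K : Set α) (ξ : Ordinal) : Set α :=
  Ordinal.limitRecOn ξ K (fun _ S => cbDeriv S)
    (fun o _ ih => ⋂ (ζ : Ordinal) (h : ζ < o), ih ζ h)

/-- The family `ℱ[𝒢]`, consisting of `∅` together with all unions
`E₁ ∪ ⋯ ∪ Eₙ` where `∅ ≠ Eᵢ ∈ 𝒢`, `E₁ < ⋯ < Eₙ` and `(min E₁, …, min Eₙ) ∈ ℱ`. -/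
def famComb (F G : Set (Finset ℕ)) : Set (Finset ℕ) :=
  {∅} ∪ {E | ∃ (n : ℕ) (Es : Fin n → Finset ℕ) (mins : Fin n → ℕ),
    (∀ i, Es i ∈ G ∧ (Es i).Nonempty) ∧
    (∀ i j : Fin n, i < j → ∀ a ∈ Es i, ∀ b ∈ Es j, a < b) ∧
    (∀ i, IsLeast (↑(Es i) : Set ℕ) (mins i)) ∧
    Finset.univ.image mins ∈ F ∧
    E = Finset.univ.biUnion Es}

/-!
Via `toCantor`, a hereditary family `ℋ` becomes a subset of `2^ℕ` on which the Cantor–Bendixson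
derivative is `ℋ' = {E ∈ ℋ : E ∪ {n} ∈ ℋ for infinitely many n}`, and `ℋ` is compact iff no
infinite set has all its finite subsets in `ℋ`.

As long as `𝒢^(η)` has a nonempty member, a large point added to a member of `ℋ[𝒢]` either starts a
singleton block after a member of `ℋ'[𝒢]` or enlarges the last block; hence for `η ≤ α`,
`(ℋ[𝒢])^(η) = ℋ'[𝒢] ∪ {members of ℋ[𝒢] whose last block lies in 𝒢^(η)}`. When `𝒢^(α) = {∅}`
(i.e. `CB(𝒢) = α + 1`) the second part is empty at `η = α`, so `α` derivatives of `ℋ[𝒢]` derive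
`ℋ` once, and by transfinite induction `(ℱ[𝒢])^(α·ξ) = ℱ^(ξ)[𝒢]`. At `ξ = β` this is
`{∅}[𝒢] = {∅}`, which says `CB(ℱ[𝒢]) = α·β + 1`.
-/

section TransIter

variable {α β : Type*} {d : Set α → Set α} {K : Set α}

noncomputable def transIter (d : Set α → Set α) (K : Set α) (ξ : Ordinal) : Set α :=
  Ordinal.limitRecOn ξ K (fun _ S => d S) (fun o _ ih => ⋂ (ζ : Ordinal) (h : ζ < o), ih ζ h)

lemma cbIter_eq_transIter [TopologicalSpace α] (K : Set α) (ξ : Ordinal) :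
    cbIter K ξ = transIter cbDeriv K ξ := rfl

@[simp] lemma transIter_zero : transIter d K 0 = K := Ordinal.limitRecOn_zero _ _ _

@[simp] lemma transIter_succ (ξ : Ordinal) : transIter d K (ξ + 1) = d (transIter d K ξ) :=
  Ordinal.limitRecOn_add_one _ _ _ _

lemma transIter_limit {o : Ordinal} (ho : Order.IsSuccLimit o) :
    transIter d K o = ⋂ ζ < o, transIter d K ζ :=
  Ordinal.limitRecOn_limit _ _ _ _ ho

lemma transIter_induction (P : Set α → Prop) (h0 : P K) (hd : ∀ S, P S → P (d S))
    (hinter : ∀ T : Set (Set α), (∀ S ∈ T, P S) → P (⋂₀ T)) (ξ : Ordinal) :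
    P (transIter d K ξ) := by
  induction ξ using Ordinal.limitRecOn with
  | zero => simpa using h0
  | add_one ξ ih => simpa using hd _ ih
  | limit o ho ih =>
    have : (⋂ ζ < o, transIter d K ζ) = ⋂₀ Set.range fun ζ : Set.Iio o => transIter d K ζ := by
      ext; simp
    rw [transIter_limit ho, this]
    exact hinter _ (by simpa using ih)

lemma transIter_antitone (hd : ∀ S, d S ⊆ S) : Antitone (transIter d K) := by
  intro η ξ hηξ
  induction ξ using Ordinal.limitRecOn with
  | zero => simp [nonpos_iff_eq_zero.mp hηξ]
  | add_one ξ ih =>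
    rcases hηξ.lt_or_eq with h | rfl
    · rw [transIter_succ]
      exact (hd _).trans (ih (Order.lt_add_one_iff.mp h))
    · rfl
  | limit o ho ih =>
    rcases hηξ.lt_or_eq with h | rfl
    · rw [transIter_limit ho]
      exact Set.iInter₂_subset η h
    · rfl

lemma transIter_add (hd : ∀ S, d S ⊆ S) (γ δ : Ordinal) :
    transIter d K (γ + δ) = transIter d (transIter d K γ) δ := by
  induction δ using Ordinal.limitRecOn with
  | zero => simp
  | add_one δ ih => rw [← add_assoc, transIter_succ, transIter_succ, ih]
  | limit o ho ih =>
    rw [transIter_limit (Ordinal.isSuccLimit_add γ ho), transIter_limit ho]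
    refine subset_antisymm ?_ ?_
    · refine Set.subset_iInter₂ fun ζ hζ => ?_
      rw [← ih ζ hζ]
      exact Set.iInter₂_subset (γ + ζ) (add_lt_add_right hζ γ)
    · refine Set.subset_iInter₂ fun η hη => ?_
      rcases le_or_gt η γ with h | h
      · refine (Set.iInter₂_subset 0 ho.pos).trans ?_
        rw [← ih 0 ho.pos, add_zero]
        exact transIter_antitone hd h
      · obtain ⟨ζ, rfl⟩ : ∃ ζ, η = γ + ζ := ⟨η - γ, (Ordinal.add_sub_cancel_of_le h.le).symm⟩
        have hζ : ζ < o := (add_lt_add_iff_left γ).mp hη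
        refine (Set.iInter₂_subset ζ hζ).trans ?_
        rw [← ih ζ hζ]

lemma image_transIter {d' : Set β → Set β} {f : α → β} (hf : Function.Injective f)
    (P : Set α → Prop) (h0 : P K) (hd : ∀ S, P S → P (d S))
    (hinter : ∀ T : Set (Set α), (∀ S ∈ T, P S) → P (⋂₀ T))
    (hcomm : ∀ S, P S → d' (f '' S) = f '' d S) (ξ : Ordinal) :
    transIter d' (f '' K) ξ = f '' transIter d K ξ := by
  induction ξ using Ordinal.limitRecOn with
  | zero => simp
  | add_one ξ ih =>
    rw [transIter_succ, transIter_succ, ih, hcomm _ (transIter_induction P h0 hd hinter ξ)]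
  | limit o ho ih =>
    have : Nonempty (Set.Iio o) := ⟨⟨0, ho.pos⟩⟩
    have h₁ : (⋂ ζ < o, transIter d K ζ) = ⋂ ζ : Set.Iio o, transIter d K ζ := by ext; simp
    have h₂ : (⋂ ζ < o, transIter d' (f '' K) ζ) = ⋂ ζ : Set.Iio o, transIter d' (f '' K) ζ := by
      ext; simp
    rw [transIter_limit ho, transIter_limit ho, h₁, h₂, hf.injOn.image_iInter_eq]
    exact Set.iInter_congr fun ζ => ih ζ ζ.2

end TransIter

section Cantor

open PiNat

lemma toCantor_injective : Function.Injective toCantor := fun E F h =>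
  Finset.ext fun n => by simpa [toCantor] using congrFun h n

lemma toCantor_mem_cylinder_iff {E F : Finset ℕ} {N : ℕ} :
    toCantor E ∈ cylinder (toCantor F) N ↔ ∀ i < N, (i ∈ E ↔ i ∈ F) := by
  simp [mem_cylinder_iff, toCantor]

lemma mem_closure_iff_cylinder {S : Set (ℕ → Bool)} {x : ℕ → Bool} :
    x ∈ closure S ↔ ∀ N, (cylinder x N ∩ S).Nonempty := by
  rw [(isTopologicalBasis_cylinders _).mem_closure_iff]
  constructor
  · exact fun h N => h _ ⟨x, N, rfl⟩ (self_mem_cylinder x N)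
  · rintro h _ ⟨y, N, rfl⟩ hx
    rw [← mem_cylinder_iff_eq.mp hx]
    exact h N

lemma isCompact_toCantor_image_iff {H : Set (Finset ℕ)} (hH : Hereditary H) :
    IsCompact (toCantor '' H) ↔ ∀ A : Set ℕ, (∀ E : Finset ℕ, ↑E ⊆ A → E ∈ H) → A.Finite := by
  classical
  constructor
  · intro hc A hA
    have hx : (fun n => decide (n ∈ A)) ∈ closure (toCantor '' H) :=
      mem_closure_iff_cylinder.mpr fun N => ⟨toCantor ((Finset.range N).filter (· ∈ A)),
        by simp +contextual [mem_cylinder_iff, toCantor], _, hA _ fun n hn => by simp_all, rfl⟩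
    obtain ⟨E, -, hE⟩ := hc.isClosed.closure_eq ▸ hx
    convert E.finite_toSet
    ext n
    simpa [toCantor] using (congrFun hE n).symm
  · intro h
    refine (isClosed_of_closure_subset fun x hx => ?_).isCompact
    have hsub : ∀ E : Finset ℕ, ↑E ⊆ {n | x n = true} → E ∈ H := by
      intro E hE
      obtain ⟨N, hN⟩ := E.exists_nat_subset_range
      obtain ⟨_, hy, E', hE', rfl⟩ := mem_closure_iff_cylinder.mp hx N
      refine hH (fun i hi => ?_) hE'
      have hxi : x i = true := hE hi
      simpa [toCantor, hxi] using mem_cylinder_iff.mp hy i (Finset.mem_range.mp (hN hi))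
    have hfin := h _ hsub
    refine ⟨hfin.toFinset, hsub _ (by simp), ?_⟩
    ext n
    simp [toCantor]

end Cantor

lemma Set.Infinite.exists_infinite_fiber {γ : Type*} {X : Set ℕ} (hX : X.Infinite) (T : Finset γ)
    (P : ℕ → γ → Prop) (h : ∀ n ∈ X, ∃ c ∈ T, P n c) : ∃ c ∈ T, {n ∈ X | P n c}.Infinite := by
  by_contra! hfin
  refine hX ((T.finite_toSet.biUnion fun c hc => hfin c hc).subset fun n hn => ?_)
  obtain ⟨c, hc, hP⟩ := h n hn
  exact Set.mem_biUnion hc ⟨hn, hP⟩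

lemma Ordinal.exists_forall_lt_of_antitone {γ : Type*} {o : Ordinal} (ho : o ≠ 0) (T : Finset γ)
    (P : γ → Ordinal → Prop) (hP : ∀ c, Antitone (P c)) (h : ∀ ζ < o, ∃ c ∈ T, P c ζ) :
    ∃ c ∈ T, ∀ ζ < o, P c ζ := by
  by_contra! hcon
  choose! b hbo hb using hcon
  obtain ⟨c, hc, hPc⟩ := h (T.sup b)
    ((Finset.sup_lt_iff (pos_iff_ne_zero.mpr ho)).mpr hbo)
  exact hb c hc (hP c (Finset.le_sup hc) hPc)

lemma StrictMonoOn.insert_ite {α β : Type*} [LinearOrder α] [Preorder β] [DecidableEq α]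
    {f : α → β} {s : Set α} {a : α} {b : β} (hf : StrictMonoOn f s) (hsa : ∀ x ∈ s, x < a)
    (hfb : ∀ x ∈ s, f x < b) : StrictMonoOn (fun x => if x = a then b else f x) (insert a s) := by
  have hne : ∀ x ∈ s, x ≠ a := fun x hx => (hsa x hx).ne
  rintro x (rfl | hx) y (rfl | hy) hxy
  · exact absurd hxy (lt_irrefl _)
  · exact absurd (hsa y hy) hxy.not_gt
  · simpa [hne x hx] using hfb x hx
  · simpa [hne x hx, hne y hy] using hf hx hy hxy

section Families

variable {H : Set (Finset ℕ)}

lemma Hereditary.empty_mem (hH : Hereditary H) (hne : H.Nonempty) : ∅ ∈ H :=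
  hne.elim fun E hE => hH E.empty_subset hE

lemma hereditary_sInter {T : Set (Set (Finset ℕ))} (hT : ∀ H ∈ T, Hereditary H) :
    Hereditary (⋂₀ T) :=
  fun _ _ hEF hF H hH => hT H hH hEF (hF H hH)

lemma spreading_sInter {T : Set (Set (Finset ℕ))} (hT : ∀ H ∈ T, Spreading H) :
    Spreading (⋂₀ T) :=
  fun E f hf hle hE H hH => hT H hH E f hf hle (hE H hH)

lemma Spreading.insert_image_mem (hH : Spreading H) {E : Finset ℕ} {f : ℕ → ℕ} {m n : ℕ}
    (hE : insert m E ∈ H) (hEm : ∀ e ∈ E, e < m) (hf : StrictMonoOn f E)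
    (hfle : ∀ e ∈ E, e ≤ f e) (hfn : ∀ e ∈ E, f e < n) (hmn : m ≤ n) :
    insert n (E.image f) ∈ H := by
  classical
  set g : ℕ → ℕ := fun x => if x = m then n else f x
  have hgE : ∀ e ∈ E, g e = f e := fun e he => if_neg (hEm e he).ne
  have himage : (insert m E).image g = insert n (E.image f) := by
    rw [Finset.image_insert, Finset.image_congr hgE]
    simp [g]
  rw [← himage]
  refine hH _ g (by simpa using hf.insert_ite hEm hfn) ?_ hE
  intro x hx
  rcases Finset.mem_insert.mp hx with rfl | hx
  · simpa [g] using hmn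
  · rw [hgE x hx]; exact hfle x hx

lemma Spreading.insert_mem_of_le (hH : Spreading H) {E : Finset ℕ} {m n : ℕ}
    (hE : insert m E ∈ H) (hEm : ∀ e ∈ E, e < m) (hmn : m ≤ n) : insert n E ∈ H := by
  simpa using hH.insert_image_mem hE hEm (f := id) (fun _ _ _ _ h => h) (fun _ _ => le_rfl)
    (fun e he => (hEm e he).trans_le hmn) hmn

lemma Spreading.exists_forall_singleton_mem (hH : Spreading H) (hHh : Hereditary H)
    (hne : ∃ E ∈ H, E.Nonempty) : ∃ m₀, ∀ n ≥ m₀, {n} ∈ H := by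
  obtain ⟨E, hE, m, hm⟩ := hne
  exact ⟨m, fun n hn => by
    simpa using hH.insert_mem_of_le (E := ∅) (by simpa using hHh (by simpa using hm) hE)
      (by simp) hn⟩

lemma mem_of_strictMonoOn_le (hHh : Hereditary H) (hHs : Spreading H) {M M' : Finset ℕ}
    (hM : M ∈ H) {g : ℕ → ℕ} (hg : StrictMonoOn g M') (hgM : ∀ x ∈ M', g x ∈ M)
    (hgle : ∀ x ∈ M', g x ≤ x) : M' ∈ H := by
  classical
  set f := Function.invFunOn g M'
  have hfg : ∀ x ∈ M', f (g x) = x := fun x hx => hg.injOn.leftInvOn_invFunOn hx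
  have himage : (M'.image g).image f = M' := by
    rw [Finset.image_image]
    exact (Finset.image_congr fun x hx => hfg x hx).trans M'.image_id
  rw [← himage]
  refine hHs _ f ?_ ?_ (hHh (fun y hy => ?_) hM)
  · rintro _ hx _ hy hxy
    simp only [Finset.coe_image, Set.mem_image, Finset.mem_coe] at hx hy
    obtain ⟨x, hx, rfl⟩ := hx
    obtain ⟨y, hy, rfl⟩ := hy
    rw [hfg x hx, hfg y hy]
    exact (hg.lt_iff_lt hx hy).mp hxy
  · intro y hy
    obtain ⟨x, hx, rfl⟩ := Finset.mem_image.mp hy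
    rw [hfg x hx]
    exact hgle x hx
  · obtain ⟨x, hx, rfl⟩ := Finset.mem_image.mp hy
    exact hgM x hx

def famDeriv (H : Set (Finset ℕ)) : Set (Finset ℕ) := {E | E ∈ H ∧ {n | insert n E ∈ H}.Infinite}

lemma famDeriv_subset (H : Set (Finset ℕ)) : famDeriv H ⊆ H := fun _ h => h.1

lemma famDeriv_mono {H' : Set (Finset ℕ)} (h : H ⊆ H') : famDeriv H ⊆ famDeriv H' :=
  fun _ hE => ⟨h hE.1, hE.2.mono fun _ hn => h hn⟩

lemma mem_famDeriv_of_forall_exists_gt {E : Finset ℕ} (hE : E ∈ H)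
    (h : ∀ N, ∃ n > N, insert n E ∈ H) : E ∈ famDeriv H :=
  ⟨hE, Set.infinite_of_forall_exists_gt fun N => (h N).imp fun _ hn => ⟨hn.2, hn.1⟩⟩

lemma famDeriv_hereditary (hH : Hereditary H) : Hereditary (famDeriv H) :=
  fun _ _ hDE hE => ⟨hH hDE hE.1, hE.2.mono fun _ hn => hH (Finset.insert_subset_insert _ hDE) hn⟩

lemma famDeriv_spreading (hH : Spreading H) : Spreading (famDeriv H) := by
  rintro E f hf hle ⟨hE, hinf⟩
  refine mem_famDeriv_of_forall_exists_gt (hH E f hf hle hE) fun N => ?_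
  obtain ⟨b, hb⟩ := (E ∪ E.image f).exists_nat_subset_range
  have hlt : ∀ x ∈ E ∪ E.image f, x < N + b := fun x hx => by
    have := Finset.mem_range.mp (hb hx); omega
  obtain ⟨n, hn, hnN⟩ := hinf.exists_gt (N + b)
  refine ⟨n, by omega, hH.insert_image_mem hn (fun e he => ?_) hf hle (fun e he => ?_) le_rfl⟩
  · exact (hlt e (Finset.mem_union_left _ he)).trans hnN
  · exact (hlt _ (Finset.mem_union_right _ (Finset.mem_image_of_mem f he))).trans hnN

lemma famDeriv_singleton_empty : famDeriv {(∅ : Finset ℕ)} = ∅ := by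
  refine Set.eq_empty_of_forall_notMem fun E hE => hE.2 (Set.finite_empty.subset ?_)
  intro n hn
  simp at hn

lemma eq_singleton_empty_of_famDeriv_eq_empty (hHh : Hereditary H) (hHs : Spreading H)
    (hne : H.Nonempty) (hd : famDeriv H = ∅) : H = {∅} := by
  refine Set.eq_singleton_iff_unique_mem.mpr ⟨hHh.empty_mem hne, fun E hE => ?_⟩
  by_contra hEne
  set m := E.max' (Finset.nonempty_iff_ne_empty.mpr hEne)
  have hEm : ∀ e ∈ E.erase m, e < m := fun e he =>
    lt_of_le_of_ne (E.le_max' e (Finset.mem_of_mem_erase he)) (Finset.ne_of_mem_erase he)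
  have hins : insert m (E.erase m) ∈ H := by rwa [Finset.insert_erase (E.max'_mem _)]
  have : E.erase m ∈ famDeriv H :=
    mem_famDeriv_of_forall_exists_gt (hHh (Finset.erase_subset _ _) hE) fun N =>
      ⟨N + m + 1, by omega, hHs.insert_mem_of_le hins hEm (by omega)⟩
  simp [hd] at this

lemma transIter_famDeriv_hereditary (hH : Hereditary H) (ξ : Ordinal) :
    Hereditary (transIter famDeriv H ξ) :=
  transIter_induction _ hH (fun _ => famDeriv_hereditary) (fun _ => hereditary_sInter) ξ

lemma transIter_famDeriv_spreading (hH : Spreading H) (ξ : Ordinal) :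
    Spreading (transIter famDeriv H ξ) :=
  transIter_induction _ hH (fun _ => famDeriv_spreading) (fun _ => spreading_sInter) ξ

lemma transIter_famDeriv_antitone (H : Set (Finset ℕ)) : Antitone (transIter famDeriv H) :=
  transIter_antitone famDeriv_subset

lemma exists_nonempty_mem_transIter_of_lt {α : Ordinal} (hα : transIter famDeriv H α = {∅})
    {ζ : Ordinal} (hζ : ζ < α) : ∃ E ∈ transIter famDeriv H ζ, E.Nonempty := by
  by_contra! h
  have hsub : transIter famDeriv H ζ ⊆ {∅} := fun E hE => by simpa using h E hE
  have : transIter famDeriv H α ⊆ ∅ := by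
    calc transIter famDeriv H α ⊆ transIter famDeriv H (ζ + 1) :=
          transIter_famDeriv_antitone H (Order.add_one_le_iff.mpr hζ)
      _ ⊆ famDeriv {∅} := by rw [transIter_succ]; exact famDeriv_mono hsub
      _ = ∅ := famDeriv_singleton_empty
  rw [hα] at this
  exact this (Set.mem_singleton ∅)

lemma cbDeriv_toCantor_image (hH : Hereditary H) :
    cbDeriv (toCantor '' H) = toCantor '' famDeriv H := by
  ext x
  constructor
  · rintro ⟨⟨E, hE, rfl⟩, hcl⟩
    refine ⟨E, mem_famDeriv_of_forall_exists_gt hE fun N => ?_, rfl⟩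
    obtain ⟨b, hb⟩ := E.exists_nat_subset_range
    obtain ⟨_, hcyl, ⟨E', hE', rfl⟩, hne⟩ := mem_closure_iff_cylinder.mp hcl (N + b + 1)
    have hagree := toCantor_mem_cylinder_iff.mp hcyl
    have hEE' : E ⊆ E' := fun i hi => (hagree i (by have := Finset.mem_range.mp (hb hi); omega)).mpr hi
    obtain ⟨n, hnE', hnE⟩ := Finset.not_subset.mp fun h => hne (congrArg toCantor (h.antisymm hEE'))
    have hn : N + b + 1 ≤ n := by
      by_contra hlt
      exact hnE ((hagree n (by omega)).mp hnE')
    exact ⟨n, by omega, hH (Finset.insert_subset hnE' hEE') hE'⟩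
  · rintro ⟨E, ⟨hE, hinf⟩, rfl⟩
    refine ⟨⟨E, hE, rfl⟩, mem_closure_iff_cylinder.mpr fun N => ?_⟩
    obtain ⟨b, hb⟩ := E.exists_nat_subset_range
    obtain ⟨n, hn, hnN⟩ := hinf.exists_gt (N + b)
    have hnE : n ∉ E := fun h => by have := Finset.mem_range.mp (hb h); omega
    refine ⟨toCantor (insert n E), toCantor_mem_cylinder_iff.mpr fun i hi => ?_, ⟨_, hn, rfl⟩, ?_⟩
    · simp [show i ≠ n by omega]
    · exact fun h => hnE (toCantor_injective h ▸ Finset.mem_insert_self n E)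

lemma cbIter_toCantor_image (hH : Hereditary H) (ξ : Ordinal) :
    cbIter (toCantor '' H) ξ = toCantor '' transIter famDeriv H ξ :=
  (cbIter_eq_transIter _ ξ).trans <| image_transIter toCantor_injective Hereditary hH (fun _ => famDeriv_hereditary)
    (fun _ => hereditary_sInter) (fun _ => cbDeriv_toCantor_image) ξ

end Families

/-- `BlockDecomp G E M`: `E = E₁ ∪ ⋯ ∪ Eₙ` with nonempty blocks `E₁ < ⋯ < Eₙ` from `G`, and
`M = {min E₁, …, min Eₙ}`; the blocks are added from left to right. -/
inductive BlockDecomp (G : Set (Finset ℕ)) : Finset ℕ → Finset ℕ → Prop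
  | empty : BlockDecomp G ∅ ∅
  | snoc {D M B : Finset ℕ} {m : ℕ} : BlockDecomp G D M → B ∈ G → IsLeast (B : Set ℕ) m →
      (∀ d ∈ D, d < m) → BlockDecomp G (D ∪ B) (insert m M)

section BlockDecomp

variable {G : Set (Finset ℕ)} {E M : Finset ℕ}

lemma blockDecomp_biUnion {n : ℕ} {Es : Fin n → Finset ℕ} {mins : Fin n → ℕ}
    (hG : ∀ i, Es i ∈ G) (hord : ∀ i j : Fin n, i < j → ∀ a ∈ Es i, ∀ b ∈ Es j, a < b)
    (hmin : ∀ i, IsLeast (↑(Es i) : Set ℕ) (mins i)) :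
    BlockDecomp G (Finset.univ.biUnion Es) (Finset.univ.image mins) := by
  induction n with
  | zero => simpa using BlockDecomp.empty
  | succ n ih =>
    have hE : Finset.univ.biUnion Es =
        Finset.univ.biUnion (fun i : Fin n => Es i.castSucc) ∪ Es (Fin.last n) := by
      ext; simp [Fin.exists_fin_succ']
    have hM : Finset.univ.image mins =
        insert (mins (Fin.last n)) (Finset.univ.image fun i : Fin n => mins i.castSucc) := by
      ext; simp [Fin.exists_fin_succ', or_comm, eq_comm]
    rw [hE, hM]
    refine .snoc (ih (fun i => hG _) (fun i j hij => hord _ _ (by simpa using hij))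
      (fun i => hmin _)) (hG _) (hmin _) fun d hd => ?_
    obtain ⟨i, -, hi⟩ := Finset.mem_biUnion.mp hd
    exact hord _ _ (Fin.castSucc_lt_last i) d hi _ (hmin _).1

lemma BlockDecomp.exists_fin (h : BlockDecomp G E M) :
    ∃ (n : ℕ) (Es : Fin n → Finset ℕ) (mins : Fin n → ℕ),
      (∀ i, Es i ∈ G ∧ (Es i).Nonempty) ∧
      (∀ i j : Fin n, i < j → ∀ a ∈ Es i, ∀ b ∈ Es j, a < b) ∧
      (∀ i, IsLeast (↑(Es i) : Set ℕ) (mins i)) ∧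
      M = Finset.univ.image mins ∧ E = Finset.univ.biUnion Es := by
  induction h with
  | empty => exact ⟨0, Fin.elim0, Fin.elim0, fun i => i.elim0, fun i => i.elim0,
      fun i => i.elim0, by simp, by simp⟩
  | @snoc D M B m _ hB hm hDm ih =>
    obtain ⟨n, Es, mins, hG, hord, hmin, rfl, rfl⟩ := ih
    refine ⟨n + 1, Fin.snoc Es B, Fin.snoc mins m, ?_, ?_, ?_, ?_, ?_⟩
    · simpa [Fin.forall_fin_succ'] using ⟨hG, hB, hm.nonempty⟩
    · simp only [Fin.forall_fin_succ', Fin.snoc_castSucc, Fin.snoc_last,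
        Fin.castSucc_lt_castSucc_iff, Fin.castSucc_lt_last, lt_self_iff_false,
        not_lt_of_ge (Fin.castSucc_lt_last _).le, false_implies, implies_true, and_true,
        forall_const]
      exact fun i => ⟨hord i, fun a ha b hb =>
        (hDm a (Finset.mem_biUnion.mpr ⟨i, Finset.mem_univ _, ha⟩)).trans_le (hm.2 hb)⟩
    · simpa [Fin.forall_fin_succ'] using ⟨hmin, hm⟩
    · ext; simp [Fin.exists_fin_succ', or_comm, eq_comm]
    · ext; simp [Fin.exists_fin_succ']

lemma mem_famComb_iff {F : Set (Finset ℕ)} :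
    E ∈ famComb F G ↔ E = ∅ ∨ ∃ M ∈ F, BlockDecomp G E M := by
  constructor
  · rintro (h | ⟨n, Es, mins, hG, hord, hmin, hF, rfl⟩)
    · exact Or.inl h
    · exact Or.inr ⟨_, hF, blockDecomp_biUnion (fun i => (hG i).1) hord hmin⟩
  · rintro (h | ⟨M, hM, hdec⟩)
    · exact Or.inl h
    · obtain ⟨n, Es, mins, hG, hord, hmin, rfl, rfl⟩ := hdec.exists_fin
      exact Or.inr ⟨n, Es, mins, hG, hord, hmin, hM, rfl⟩

lemma BlockDecomp.subset (h : BlockDecomp G E M) : M ⊆ E := by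
  induction h with
  | empty => exact le_rfl
  | snoc _ _ hm _ ih =>
    exact Finset.insert_subset (Finset.mem_union_right _ hm.1) (ih.trans Finset.subset_union_left)

lemma BlockDecomp.exists_le (h : BlockDecomp G E M) {e : ℕ} (he : e ∈ E) : ∃ m ∈ M, m ≤ e := by
  induction h with
  | empty => simp at he
  | snoc _ _ hm _ ih =>
    rcases Finset.mem_union.mp he with he | he
    · obtain ⟨m', hm', hle⟩ := ih he
      exact ⟨m', Finset.mem_insert_of_mem hm', hle⟩
    · exact ⟨_, Finset.mem_insert_self _ _, hm.2 he⟩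

lemma BlockDecomp.eq_empty_of_right (h : BlockDecomp G E ∅) : E = ∅ :=
  Finset.eq_empty_of_forall_notMem fun _ he => by simpa using h.exists_le he

lemma BlockDecomp.eq_empty_of_singleton_empty (h : BlockDecomp {∅} E M) : E = ∅ := by
  cases h with
  | empty => rfl
  | snoc _ hB hm =>
    obtain rfl := Set.mem_singleton_iff.mp hB
    exact absurd hm.1 (by simp)

lemma BlockDecomp.mem_of_subset (hG : Hereditary G) (h : BlockDecomp G E M) {m : ℕ} (hm : m ∈ M)
    {S : Finset ℕ} (hSE : S ⊆ E) (hS : ∀ s ∈ S, m ≤ s ∧ ∀ m' ∈ M, m < m' → s < m') : S ∈ G := by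
  induction h generalizing S with
  | empty => simp at hm
  | @snoc D M B mB hD hB hmB hDm ih =>
    rcases Finset.mem_insert.mp hm with rfl | hm
    · refine hG (fun s hs => ?_) hB
      exact (Finset.mem_union.mp (hSE hs)).resolve_left fun hsD => (hDm s hsD).not_ge (hS s hs).1
    · have hm_lt : m < mB := hDm m (hD.subset hm)
      refine ih hm (fun s hs => ?_) fun s hs => ⟨(hS s hs).1, fun m' hm' => (hS s hs).2 m'
        (Finset.mem_insert_of_mem hm')⟩
      have hsB : s < mB := (hS s hs).2 mB (Finset.mem_insert_self _ _) hm_lt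
      exact (Finset.mem_union.mp (hSE hs)).resolve_right fun h => (hmB.2 h).not_gt hsB

lemma BlockDecomp.image (hG : Spreading G) (h : BlockDecomp G E M) {f : ℕ → ℕ}
    (hf : StrictMonoOn f E) (hle : ∀ e ∈ E, e ≤ f e) : BlockDecomp G (E.image f) (M.image f) := by
  induction h with
  | empty => simpa using BlockDecomp.empty
  | @snoc D M B m _ hB hm hDm ih =>
    have hDB : ↑D ⊆ (↑(D ∪ B) : Set ℕ) := by simp
    have hBDB : ↑B ⊆ (↑(D ∪ B) : Set ℕ) := by simp
    rw [Finset.image_union, Finset.image_insert]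
    refine .snoc (ih (hf.mono hDB) fun e he => hle e (Finset.mem_union_left _ he))
      (hG B f (hf.mono hBDB) (fun e he => hle e (Finset.mem_union_right _ he)) hB) ⟨?_, ?_⟩ ?_
    · exact Finset.mem_coe.mpr (Finset.mem_image_of_mem f hm.1)
    · intro _ hfb
      obtain ⟨b, hb, rfl⟩ := Finset.mem_image.mp hfb
      exact hf.monotoneOn (hBDB hm.1) (hBDB hb) (hm.2 hb)
    · intro _ hfd
      obtain ⟨d, hd, rfl⟩ := Finset.mem_image.mp hfd
      exact hf (hDB hd) (hBDB hm.1) (hDm d hd)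

lemma BlockDecomp.restrict (hG : Hereditary G) (h : BlockDecomp G E M) {D : Finset ℕ}
    (hD : D ⊆ E) : ∃ M' g, BlockDecomp G D M' ∧ StrictMonoOn g M' ∧ (∀ x ∈ M', g x ∈ M) ∧
      ∀ x ∈ M', g x ≤ x := by
  induction h generalizing D with
  | empty =>
    obtain rfl := Finset.subset_empty.mp hD
    exact ⟨∅, id, .empty, strictMono_id.strictMonoOn _, by simp, by simp⟩
  | @snoc E M B m hE hB hm hEm ih =>
    set D₀ := D.filter (· < m)
    set D₁ := D.filter (fun x => ¬ x < m)
    have hD₀ : D₀ ⊆ E := fun x hx => by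
      obtain ⟨hxD, hxm⟩ := Finset.mem_filter.mp hx
      exact (Finset.mem_union.mp (hD hxD)).resolve_right fun hxB => (hm.2 hxB).not_gt hxm
    have hD₁ : D₁ ⊆ B := fun x hx => by
      obtain ⟨hxD, hxm⟩ := Finset.mem_filter.mp hx
      exact (Finset.mem_union.mp (hD hxD)).resolve_left fun hxE => hxm (hEm x hxE)
    obtain ⟨M₀, g₀, hdec₀, hg₀, hg₀M, hg₀le⟩ := ih hD₀
    rw [show D = D₀ ∪ D₁ from (Finset.filter_union_filter_not_eq _ D).symm]
    rcases D₁.eq_empty_or_nonempty with h₁ | h₁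
    · rw [h₁, Finset.union_empty]
      exact ⟨M₀, g₀, hdec₀, hg₀, fun x hx => Finset.mem_insert_of_mem (hg₀M x hx), hg₀le⟩
    have hM₀m : ∀ x ∈ M₀, x < m := fun x hx => (Finset.mem_filter.mp (hdec₀.subset hx)).2
    have hm₁ : m ≤ D₁.min' h₁ := hm.2 (hD₁ (D₁.min'_mem h₁))
    have hne : ∀ x ∈ M₀, x ≠ D₁.min' h₁ := fun x hx => ((hM₀m x hx).trans_le hm₁).ne
    refine ⟨insert (D₁.min' h₁) M₀, fun x => if x = D₁.min' h₁ then m else g₀ x,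
      .snoc hdec₀ (hG hD₁ hB) (Finset.isLeast_min' D₁ h₁)
        (fun d hd => (Finset.mem_filter.mp hd).2.trans_le hm₁), ?_, ?_, ?_⟩
    · simpa using hg₀.insert_ite (fun x hx => (hM₀m x hx).trans_le hm₁)
        fun x hx => hEm _ (hE.subset (hg₀M x hx))
    · intro x hx
      rcases Finset.mem_insert.mp hx with rfl | hx
      · simp
      · simpa [hne x hx] using Or.inr (hg₀M x hx)
    · intro x hx
      rcases Finset.mem_insert.mp hx with rfl | hx
      · simpa using hm₁
      · simpa [hne x hx] using hg₀le x hx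

end BlockDecomp

section FamComb

variable {F G : Set (Finset ℕ)}

lemma famComb_mono_left {F' : Set (Finset ℕ)} (h : F ⊆ F') : famComb F G ⊆ famComb F' G := by
  intro E hE
  rw [mem_famComb_iff] at hE ⊢
  exact hE.imp_right fun ⟨M, hM, hdec⟩ => ⟨M, h hM, hdec⟩

lemma famComb_singleton_empty_left : famComb {∅} G = {∅} := by
  ext E
  simp only [mem_famComb_iff, Set.mem_singleton_iff, exists_eq_left, or_iff_left_iff_imp]
  exact BlockDecomp.eq_empty_of_right

lemma famComb_singleton_empty_right : famComb F {∅} = {∅} := by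
  ext E
  simp only [mem_famComb_iff, Set.mem_singleton_iff, or_iff_left_iff_imp]
  exact fun ⟨_, _, hdec⟩ => hdec.eq_empty_of_singleton_empty

lemma famComb_spreading (hF : Spreading F) (hG : Spreading G) : Spreading (famComb F G) := by
  intro E f hf hle hE
  rw [mem_famComb_iff] at hE ⊢
  rcases hE with rfl | ⟨M, hM, hdec⟩
  · simp
  · have hME : ↑M ⊆ (↑E : Set ℕ) := Finset.coe_subset.mpr hdec.subset
    exact Or.inr ⟨_, hF M f (hf.mono hME) (fun x hx => hle x (hME hx)) hM, hdec.image hG hf hle⟩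

lemma famComb_hereditary (hFh : Hereditary F) (hFs : Spreading F) (hG : Hereditary G) :
    Hereditary (famComb F G) := by
  intro D E hDE hE
  rw [mem_famComb_iff] at hE ⊢
  rcases hE with rfl | ⟨M, hM, hdec⟩
  · exact Or.inl (Finset.subset_empty.mp hDE)
  · obtain ⟨M', g, hdec', hg, hgM, hgle⟩ := hdec.restrict hG hDE
    exact Or.inr ⟨M', mem_of_strictMonoOn_le hFh hFs hM hg hgM hgle, hdec'⟩

open Filter in
lemma IsCompact.exists_frequently_agree {F : Set (Finset ℕ)} (hF : IsCompact (toCantor '' F))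
    {M : ℕ → Finset ℕ} (hM : ∀ N, M N ∈ F) :
    ∃ Mlim ∈ F, ∀ K, ∃ N ≥ K, ∀ i < K, (i ∈ M N ↔ i ∈ Mlim) := by
  obtain ⟨_, ⟨Mlim, hMlim, rfl⟩, hclus⟩ := hF.exists_mapClusterPt (f := atTop)
    (u := fun N => toCantor (M N)) (tendsto_principal.mpr (.of_forall fun N => ⟨_, hM N, rfl⟩))
  refine ⟨Mlim, hMlim, fun K => ?_⟩
  obtain ⟨N, hN, hcyl⟩ := frequently_atTop.mp (mapClusterPt_iff_frequently.mp hclus _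
    ((PiNat.isOpen_cylinder _ _ K).mem_nhds (PiNat.self_mem_cylinder _ K))) K
  exact ⟨N, hN, toCantor_mem_cylinder_iff.mp hcyl⟩

/-- If an infinite `A` had all finite subsets in `ℱ[𝒢]`, the cut points of its initial segments
would accumulate at some `M ∈ ℱ`; beyond `max M` the segments then lie in single blocks, so all
finite subsets of a tail of `A` would be in `𝒢`. -/
lemma famComb_isCompact (hFh : Hereditary F) (hFs : Spreading F) (hFc : IsCompact (toCantor '' F))
    (hGh : Hereditary G) (hGc : IsCompact (toCantor '' G)) :
    IsCompact (toCantor '' famComb F G) := by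
  classical
  rw [isCompact_toCantor_image_iff (famComb_hereditary hFh hFs hGh)]
  intro A hA
  by_contra hinf
  obtain ⟨a₀, ha₀⟩ := Set.Infinite.nonempty hinf
  set seg : ℕ → Finset ℕ := fun N => (Finset.range (N + a₀ + 1)).filter (· ∈ A)
  have ha₀seg : ∀ N, a₀ ∈ seg N := fun N => by simp [seg, ha₀]
  have hseg : ∀ N, ∃ M ∈ F, BlockDecomp G (seg N) M := fun N =>
    (mem_famComb_iff.mp (hA _ fun n hn => (Finset.mem_filter.mp hn).2)).resolve_left
      (Finset.ne_empty_of_mem (ha₀seg N))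
  choose M hMF hMdec using hseg
  obtain ⟨Mlim, -, hagree⟩ := hFc.exists_frequently_agree hMF
  have hne : Mlim.Nonempty := by
    obtain ⟨N, -, hN⟩ := hagree (a₀ + 1)
    obtain ⟨m, hm, hma₀⟩ := (hMdec N).exists_le (ha₀seg N)
    exact ⟨m, (hN m (by omega)).mp hm⟩
  set m := Mlim.max' hne
  have htail : ∀ E : Finset ℕ, ↑E ⊆ A ∩ Set.Ici m → E ∈ G := by
    intro E hE
    obtain ⟨K, hK⟩ := (insert m E).exists_nat_subset_range
    have hlt : ∀ x ∈ insert m E, x < K := fun x hx => Finset.mem_range.mp (hK hx)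
    obtain ⟨N, hNK, hN⟩ := hagree K
    have hmN : m ∈ M N := (hN m (hlt m (Finset.mem_insert_self _ _))).mpr (Mlim.max'_mem hne)
    refine (hMdec N).mem_of_subset hGh hmN (fun e he => ?_) fun e he => ⟨(hE he).2, ?_⟩
    · have := hlt e (Finset.mem_insert_of_mem he)
      exact Finset.mem_filter.mpr ⟨Finset.mem_range.mpr (by omega), (hE he).1⟩
    · refine fun m' hm' hmm' => lt_of_not_ge fun hle => hmm'.not_ge (Mlim.le_max' m' ?_)
      exact (hN m' (hle.trans_lt (hlt e (Finset.mem_insert_of_mem he)))).mp hm'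
  refine hinf (((isCompact_toCantor_image_iff hGh).mp hGc _ htail).union (Set.finite_Iio m)
    |>.subset fun x hx => ?_)
  by_cases hxm : m ≤ x
  · exact Or.inl ⟨hx, hxm⟩
  · exact Or.inr (lt_of_not_ge hxm)

lemma iInter_famComb_of_antitone {o : Ordinal} (ho : o ≠ 0) {K : Ordinal → Set (Finset ℕ)}
    (hK : Antitone K) :
    ⋂ ζ < o, famComb (K ζ) G = famComb (⋂ ζ < o, K ζ) G := by
  refine subset_antisymm (fun E hE => ?_)
    (Set.subset_iInter₂ fun ζ hζ => famComb_mono_left (Set.iInter₂_subset ζ hζ))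
  simp only [Set.mem_iInter, mem_famComb_iff] at hE
  rw [mem_famComb_iff]
  refine (em (E = ∅)).imp id fun hE₀ => ?_
  obtain ⟨M, -, hM⟩ := Ordinal.exists_forall_lt_of_antitone ho E.powerset
    (fun M ζ => M ∈ K ζ ∧ BlockDecomp G E M) (fun M _ _ h hM => ⟨hK h hM.1, hM.2⟩)
    fun ζ hζ => by
      obtain ⟨M, hMK, hdec⟩ := (hE ζ hζ).resolve_left hE₀
      exact ⟨M, Finset.mem_powerset.mpr hdec.subset, hMK, hdec⟩
  exact ⟨M, Set.mem_iInter₂.mpr fun ζ hζ => (hM ζ hζ).1, (hM 0 (pos_iff_ne_zero.mpr ho)).2⟩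

end FamComb

def famCombLast (H G K : Set (Finset ℕ)) : Set (Finset ℕ) :=
  {E | ∃ D M B m, BlockDecomp G D M ∧ B ∈ K ∧ IsLeast (B : Set ℕ) m ∧ (∀ d ∈ D, d < m) ∧
    insert m M ∈ H ∧ E = D ∪ B}

section FamCombLast

variable {H G K : Set (Finset ℕ)}

lemma famCombLast_mono {K' : Set (Finset ℕ)} (h : K ⊆ K') :
    famCombLast H G K ⊆ famCombLast H G K' :=
  fun _ ⟨D, M, B, m, hdec, hB, hm, hDm, hH, hE⟩ => ⟨D, M, B, m, hdec, h hB, hm, hDm, hH, hE⟩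

lemma famCombLast_singleton_empty : famCombLast H G {∅} = ∅ :=
  Set.eq_empty_of_forall_notMem fun _ ⟨_, _, B, _, _, hB, hm, _⟩ => by
    obtain rfl := Set.mem_singleton_iff.mp hB
    exact absurd hm.1 (by simp)

lemma famComb_eq_union_famCombLast :
    famComb H G = famComb (famDeriv H) G ∪ famCombLast H G G := by
  refine subset_antisymm (fun E hE => ?_) (Set.union_subset
    (famComb_mono_left (famDeriv_subset H)) fun E ⟨D, M, B, m, hdec, hB, hm, hDm, hH, hE⟩ => ?_)
  · rcases mem_famComb_iff.mp hE with rfl | ⟨M, hM, hdec⟩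
    · exact Or.inl (mem_famComb_iff.mpr (Or.inl rfl))
    · cases hdec with
      | empty => exact Or.inl (mem_famComb_iff.mpr (Or.inl rfl))
      | snoc hdec hB hm hDm => exact Or.inr ⟨_, _, _, _, hdec, hB, hm, hDm, hM, rfl⟩
  · exact mem_famComb_iff.mpr (Or.inr ⟨_, hH, hE ▸ .snoc hdec hB hm hDm⟩)

lemma iInter_famCombLast_of_antitone {o : Ordinal} (ho : o ≠ 0) {K : Ordinal → Set (Finset ℕ)}
    (hK : Antitone K) : ⋂ ζ < o, famCombLast H G (K ζ) = famCombLast H G (⋂ ζ < o, K ζ) := by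
  refine subset_antisymm (fun E hE => ?_)
    (Set.subset_iInter₂ fun ζ hζ => famCombLast_mono (Set.iInter₂_subset ζ hζ))
  simp only [Set.mem_iInter] at hE
  obtain ⟨⟨D, M, B, m⟩, -, hc⟩ := Ordinal.exists_forall_lt_of_antitone ho
    (E.powerset ×ˢ E.powerset ×ˢ E.powerset ×ˢ E)
    (fun c ζ => BlockDecomp G c.1 c.2.1 ∧ c.2.2.1 ∈ K ζ ∧ IsLeast (c.2.2.1 : Set ℕ) c.2.2.2 ∧
      (∀ d ∈ c.1, d < c.2.2.2) ∧ insert c.2.2.2 c.2.1 ∈ H ∧ E = c.1 ∪ c.2.2.1)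
    (fun _ _ _ h hc => ⟨hc.1, hK h hc.2.1, hc.2.2⟩) fun ζ hζ => by
      obtain ⟨D, M, B, m, hdec, hB, hm, hDm, hH, rfl⟩ := hE ζ hζ
      refine ⟨(D, M, B, m), ?_, hdec, hB, hm, hDm, hH, rfl⟩
      simp only [Finset.mem_product, Finset.mem_powerset, Finset.mem_union]
      exact ⟨Finset.subset_union_left, hdec.subset.trans Finset.subset_union_left,
        Finset.subset_union_right, Or.inr hm.1⟩
  obtain ⟨hdec, -, hm, hDm, hH, hE⟩ := hc 0 (pos_iff_ne_zero.mpr ho)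
  exact ⟨D, M, B, m, hdec, Set.mem_iInter₂.mpr fun ζ hζ => (hc ζ hζ).2.1, hm, hDm, hH, hE⟩

lemma insert_mem_famCombLast_of_blockDecomp {E M : Finset ℕ} {n : ℕ} (hdec : BlockDecomp G E M)
    (hH : insert n M ∈ H) (hK : {n} ∈ K) (hEn : ∀ e ∈ E, e < n) :
    insert n E ∈ famCombLast H G K :=
  ⟨E, M, {n}, n, hdec, hK, by simp, hEn, hH, by rw [Finset.insert_eq, Finset.union_comm]⟩

lemma insert_mem_famCombLast {D M B : Finset ℕ} {m n : ℕ} (hdec : BlockDecomp G D M)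
    (hm : IsLeast (B : Set ℕ) m) (hDm : ∀ d ∈ D, d < m) (hH : insert m M ∈ H)
    (hK : insert n B ∈ K) (hBn : ∀ b ∈ B, b < n) : insert n (D ∪ B) ∈ famCombLast H G K := by
  refine ⟨D, M, insert n B, m, hdec, hK, ⟨by simpa using Or.inr hm.1, fun b hb => ?_⟩, hDm, hH,
    (Finset.union_insert _ _ _).symm⟩
  rcases Finset.mem_insert.mp hb with rfl | hb
  · exact (hBn m hm.1).le
  · exact hm.2 hb

lemma isLeast_of_isLeast_insert {B : Finset ℕ} {m n : ℕ} (hB : B.Nonempty)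
    (hBn : ∀ b ∈ B, b < n) (h : IsLeast (↑(insert n B) : Set ℕ) m) : IsLeast (B : Set ℕ) m := by
  refine ⟨?_, fun b hb => h.2 (Finset.mem_insert_of_mem hb)⟩
  rcases Finset.mem_insert.mp h.1 with rfl | hm
  · obtain ⟨b, hb⟩ := hB
    exact absurd (h.2 (Finset.mem_insert_of_mem hb)) (hBn b hb).not_ge
  · exact hm

/-- A new maximum `n` can only sit in the last block. -/
lemma exists_of_insert_mem_famCombLast {E : Finset ℕ} {n : ℕ} (hEn : ∀ e ∈ E, e < n)
    (h : insert n E ∈ famCombLast H G K) :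
    ∃ D M B m, (D ⊆ E ∧ M ⊆ E ∧ B ⊆ E) ∧ BlockDecomp G D M ∧ insert n B ∈ K ∧
      IsLeast (↑(insert n B) : Set ℕ) m ∧ (∀ d ∈ D, d < m) ∧ insert m M ∈ H ∧ E = D ∪ B := by
  obtain ⟨D, M, B, m, hdec, hB, hm, hDm, hH, hE⟩ := h
  have hle : ∀ x ∈ D ∪ B, x ≤ n := fun x hx => by
    rw [← hE] at hx
    rcases Finset.mem_insert.mp hx with rfl | hx
    exacts [le_rfl, (hEn x hx).le]
  have hnD : n ∉ D := fun hn => (hDm n hn).not_ge (hle m (Finset.mem_union_right _ hm.1))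
  have hnB : n ∈ B := by
    have := hE ▸ Finset.mem_insert_self n E
    exact (Finset.mem_union.mp this).resolve_left hnD
  have hnE : n ∉ E := fun hn => (hEn n hn).false
  have hsub : D ∪ B.erase n ⊆ E := fun x hx => by
    have hx' : x ∈ insert n E := hE ▸ Finset.union_subset_union le_rfl (B.erase_subset n) hx
    refine (Finset.mem_insert.mp hx').resolve_left fun hxn => ?_
    subst hxn
    rcases Finset.mem_union.mp hx with hx | hx
    exacts [hnD hx, Finset.notMem_erase _ _ hx]
  rw [← Finset.insert_erase hnB] at hB hm
  refine ⟨D, M, B.erase n, m, ⟨fun x hx => hsub (Finset.mem_union_left _ hx),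
    hdec.subset.trans fun x hx => hsub (Finset.mem_union_left _ hx),
    fun x hx => hsub (Finset.mem_union_right _ hx)⟩, hdec, hB, hm, hDm, hH, ?_⟩
  have : insert n E = insert n (D ∪ B.erase n) := by
    rw [hE, ← Finset.union_insert, Finset.insert_erase hnB]
  rw [← Finset.erase_insert hnE, this, Finset.erase_insert fun hn => hnE (hsub hn)]

lemma famDeriv_union_famCombLast_subset (hHh : Hereditary H) (hHs : Spreading H)
    (hG : Hereditary G) (hK : Hereditary K) :
    famDeriv (famComb (famDeriv H) G ∪ famCombLast H G K) ⊆
      famComb (famDeriv H) G ∪ famCombLast H G (famDeriv K) := by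
  rintro E ⟨-, hinf⟩
  by_cases hc : ∃ n, insert n E ∈ famComb (famDeriv H) G
  · obtain ⟨n, hn⟩ := hc
    exact Or.inl (famComb_hereditary (famDeriv_hereditary hHh) (famDeriv_spreading hHs) hG
      (Finset.subset_insert n E) hn)
  simp only [not_exists] at hc
  obtain ⟨b, hb⟩ := E.exists_nat_subset_range
  have hEn : ∀ n, b ≤ n → ∀ e ∈ E, e < n := fun n hn e he =>
    (Finset.mem_range.mp (hb he)).trans_le hn
  obtain ⟨⟨D, M, B⟩, -, hfib⟩ := (hinf.sdiff (Set.finite_Iio b)).exists_infinite_fiber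
    (E.powerset ×ˢ E.powerset ×ˢ E.powerset)
    (fun n c => BlockDecomp G c.1 c.2.1 ∧ insert n c.2.2 ∈ K ∧ ∃ m,
      IsLeast (↑(insert n c.2.2) : Set ℕ) m ∧ (∀ d ∈ c.1, d < m) ∧ insert m c.2.1 ∈ H ∧
        E = c.1 ∪ c.2.2) fun n ⟨hn, hbn⟩ => by
      obtain ⟨D, M, B, m, hsub, hdec, hK, hm, hDm, hH, hE⟩ :=
        exists_of_insert_mem_famCombLast (hEn n (not_lt.mp hbn)) ((hn).resolve_left (hc n))
      exact ⟨(D, M, B), by simpa using hsub, hdec, hK, m, hm, hDm, hH, hE⟩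
  obtain ⟨n₁, ⟨-, hbn₁⟩, hdec, hK₁, m₁, hm₁, hDm₁, hH₁, rfl⟩ := hfib.nonempty
  rcases B.eq_empty_or_nonempty with rfl | hB
  · refine Or.inl (mem_famComb_iff.mpr (Or.inr ⟨M, ⟨hHh (Finset.subset_insert _ _) hH₁,
      hfib.mono fun n hn => ?_⟩, by simpa using hdec⟩))
    obtain ⟨-, -, -, m, hm, -, hH, -⟩ := hn
    obtain rfl : m = n := by simpa using hm.1
    exact hH
  · exact Or.inr ⟨D, M, B, m₁, hdec, ⟨hK (Finset.subset_insert _ _) hK₁,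
      hfib.mono fun n hn => hn.2.2.1⟩,
      isLeast_of_isLeast_insert hB
        (fun x hx => hEn n₁ (not_lt.mp hbn₁) x (Finset.mem_union_right _ hx)) hm₁,
      hDm₁, hH₁, rfl⟩

lemma famComb_union_famCombLast_subset_famDeriv (hHh : Hereditary H) (hHs : Spreading H)
    (hHne : ∃ E ∈ H, E.Nonempty) (hKh : Hereditary K) (hKs : Spreading K)
    (hKne : ∃ B ∈ K, B.Nonempty) :
    famComb (famDeriv H) G ∪ famCombLast H G (famDeriv K) ⊆
      famDeriv (famComb (famDeriv H) G ∪ famCombLast H G K) := by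
  obtain ⟨nK, hnK⟩ := hKs.exists_forall_singleton_mem hKh hKne
  rintro E (hE | ⟨D, M, B, m, hdec, ⟨hBK, hBinf⟩, hm, hDm, hH, rfl⟩)
  · refine mem_famDeriv_of_forall_exists_gt (Or.inl hE) fun N => ?_
    obtain ⟨b, hb⟩ := E.exists_nat_subset_range
    rcases mem_famComb_iff.mp hE with rfl | ⟨M, ⟨-, hMinf⟩, hdec⟩
    · obtain ⟨nH, hnH⟩ := hHs.exists_forall_singleton_mem hHh hHne
      exact ⟨N + nH + nK + 1, by omega, Or.inr (insert_mem_famCombLast_of_blockDecomp .empty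
        (by simpa using hnH _ (by omega)) (hnK _ (by omega)) (by simp))⟩
    · obtain ⟨n, hn, hnN⟩ := hMinf.exists_gt (N + b + nK)
      exact ⟨n, by omega, Or.inr (insert_mem_famCombLast_of_blockDecomp hdec hn (hnK n (by omega))
        fun e he => by have := Finset.mem_range.mp (hb he); omega)⟩
  · refine mem_famDeriv_of_forall_exists_gt (Or.inr ⟨D, M, B, m, hdec, hBK, hm, hDm, hH, rfl⟩)
      fun N => ?_
    obtain ⟨b, hb⟩ := B.exists_nat_subset_range
    obtain ⟨n, hn, hnN⟩ := hBinf.exists_gt (N + b)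
    exact ⟨n, by omega, Or.inr (insert_mem_famCombLast hdec hm hDm hH hn
      fun x hx => by have := Finset.mem_range.mp (hb hx); omega)⟩

lemma famDeriv_union_famCombLast (hHh : Hereditary H) (hHs : Spreading H)
    (hHne : ∃ E ∈ H, E.Nonempty) (hG : Hereditary G) (hKh : Hereditary K) (hKs : Spreading K)
    (hKne : ∃ B ∈ K, B.Nonempty) :
    famDeriv (famComb (famDeriv H) G ∪ famCombLast H G K) =
      famComb (famDeriv H) G ∪ famCombLast H G (famDeriv K) :=
  subset_antisymm (famDeriv_union_famCombLast_subset hHh hHs hG hKh)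
    (famComb_union_famCombLast_subset_famDeriv hHh hHs hHne hKh hKs hKne)

lemma transIter_famDeriv_famComb (hHh : Hereditary H) (hHs : Spreading H)
    (hHne : ∃ E ∈ H, E.Nonempty) (hGh : Hereditary G) (hGs : Spreading G) (ξ : Ordinal)
    (hGξ : ∀ ζ < ξ, ∃ B ∈ transIter famDeriv G ζ, B.Nonempty) :
    transIter famDeriv (famComb H G) ξ =
      famComb (famDeriv H) G ∪ famCombLast H G (transIter famDeriv G ξ) := by
  induction ξ using Ordinal.limitRecOn with
  | zero => simpa using famComb_eq_union_famCombLast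
  | add_one ξ ih =>
    rw [transIter_succ, transIter_succ, ih fun ζ hζ => hGξ ζ (hζ.trans (lt_add_one ξ)),
      famDeriv_union_famCombLast hHh hHs hHne hGh (transIter_famDeriv_hereditary hGh ξ)
        (transIter_famDeriv_spreading hGs ξ) (hGξ ξ (lt_add_one ξ))]
  | limit o ho ih =>
    rw [transIter_limit ho, transIter_limit ho, ← iInter_famCombLast_of_antitone ho.ne_bot
      (transIter_famDeriv_antitone G), Set.union_iInter₂]
    exact Set.iInter_congr fun ζ => Set.iInter_congr fun hζ =>
      ih ζ hζ fun η hη => hGξ η (hη.trans hζ)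

end FamCombLast

section Rank

variable {F G : Set (Finset ℕ)}

lemma iInter_lt_mul_of_antitone {S : Ordinal → Set (Finset ℕ)} (hS : Antitone S) {α o : Ordinal}
    (hα : 0 < α) (ho : Order.IsSuccLimit o) : ⋂ η < α * o, S η = ⋂ ζ < o, S (α * ζ) := by
  refine subset_antisymm (Set.subset_iInter₂ fun ζ hζ => ?_) (Set.subset_iInter₂ fun η hη => ?_)
  · exact Set.iInter₂_subset (κ := fun η => η < α * o) (α * ζ)
      ((mul_lt_mul_iff_of_pos_left hα).mpr hζ)
  obtain ⟨ζ, hζ, hηζ⟩ := (Ordinal.lt_mul_iff_of_isSuccLimit ho).mp hη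
  exact (Set.iInter₂_subset ζ hζ).trans (hS hηζ.le)

lemma transIter_famDeriv_famComb_mul (hFh : Hereditary F) (hFs : Spreading F)
    (hGh : Hereditary G) (hGs : Spreading G) {α : Ordinal} (hGα : transIter famDeriv G α = {∅})
    (ξ : Ordinal) (hFξ : ∀ ζ < ξ, ∃ E ∈ transIter famDeriv F ζ, E.Nonempty) :
    transIter famDeriv (famComb F G) (α * ξ) = famComb (transIter famDeriv F ξ) G := by
  rcases eq_zero_or_pos α with rfl | hα
  · rw [transIter_zero] at hGα
    rw [zero_mul, transIter_zero, hGα, famComb_singleton_empty_right, famComb_singleton_empty_right]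
  induction ξ using Ordinal.limitRecOn with
  | zero => simp
  | add_one ξ ih =>
    have hξ : ξ < ξ + 1 := lt_add_one ξ
    rw [mul_add_one, transIter_add famDeriv_subset, ih fun ζ hζ => hFξ ζ (hζ.trans hξ),
      transIter_famDeriv_famComb (transIter_famDeriv_hereditary hFh ξ)
        (transIter_famDeriv_spreading hFs ξ) (hFξ ξ hξ) hGh hGs α
        fun ζ hζ => exists_nonempty_mem_transIter_of_lt hGα hζ,
      hGα, famCombLast_singleton_empty, Set.union_empty, transIter_succ]
  | limit o ho ih =>
    rw [transIter_limit (Ordinal.isSuccLimit_mul_right hα ho),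
      iInter_lt_mul_of_antitone (transIter_famDeriv_antitone _) hα ho, transIter_limit ho,
      ← iInter_famComb_of_antitone ho.ne_bot (transIter_famDeriv_antitone F)]
    exact Set.iInter_congr fun ζ => Set.iInter_congr fun hζ =>
      ih ζ hζ fun η hη => hFξ η (hη.trans hζ)

lemma cbIter_add_one_eq_empty_and_ne_empty_iff {H : Set (Finset ℕ)} (hHh : Hereditary H)
    (hHs : Spreading H) (ξ : Ordinal) :
    (cbIter (toCantor '' H) (ξ + 1) = ∅ ∧ cbIter (toCantor '' H) ξ ≠ ∅) ↔
      transIter famDeriv H ξ = {∅} := by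
  rw [cbIter_toCantor_image hHh, cbIter_toCantor_image hHh, Set.image_eq_empty, Ne,
    Set.image_eq_empty, transIter_succ]
  constructor
  · rintro ⟨hd, hne⟩
    exact eq_singleton_empty_of_famDeriv_eq_empty (transIter_famDeriv_hereditary hHh ξ)
      (transIter_famDeriv_spreading hHs ξ) (Set.nonempty_iff_ne_empty.mpr hne) hd
  · intro h
    rw [h]
    exact ⟨famDeriv_singleton_empty, Set.singleton_ne_empty _⟩

end Rank

theorem famComb_regular_and_CB_general (F G : Set (Finset ℕ))
    (hF : IsRegularFam F) (hG : IsRegularFam G) :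
    IsRegularFam (famComb F G) ∧
    ∀ α β : Ordinal,
      cbIter (toCantor '' F) (β + 1) = ∅ → cbIter (toCantor '' F) β ≠ ∅ →
      cbIter (toCantor '' G) (α + 1) = ∅ → cbIter (toCantor '' G) α ≠ ∅ →
      cbIter (toCantor '' famComb F G) (α * β + 1) = ∅ ∧
        cbIter (toCantor '' famComb F G) (α * β) ≠ ∅ := by
  obtain ⟨hFc, hFh, hFs⟩ := hF
  obtain ⟨hGc, hGh, hGs⟩ := hG
  have hCh := famComb_hereditary hFh hFs hGh
  have hCs := famComb_spreading hFs hGs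
  refine ⟨⟨famComb_isCompact hFh hFs hFc hGh hGc, hCh, hCs⟩, fun α β hFβ₁ hFβ hGα₁ hGα => ?_⟩
  have hFβ' := (cbIter_add_one_eq_empty_and_ne_empty_iff hFh hFs β).mp ⟨hFβ₁, hFβ⟩
  have hGα' := (cbIter_add_one_eq_empty_and_ne_empty_iff hGh hGs α).mp ⟨hGα₁, hGα⟩
  rw [cbIter_add_one_eq_empty_and_ne_empty_iff hCh hCs,
    transIter_famDeriv_famComb_mul hFh hFs hGh hGs hGα' β
      fun ζ hζ => exists_nonempty_mem_transIter_of_lt hFβ' hζ,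
    hFβ', famComb_singleton_empty_left]

/-- For nonempty regular families `ℱ, 𝒢`, the family `ℱ[𝒢]` is regular; moreover if
`CB(ℱ) = β+1` and `CB(𝒢) = α+1` then `CB(ℱ[𝒢]) = α·β + 1`. -/
theorem famComb_regular_and_CB (F G : Set (Finset ℕ))
    (hF : IsRegularFam F) (hG : IsRegularFam G) (hFne : F.Nonempty) (hGne : G.Nonempty) :
    IsRegularFam (famComb F G) ∧
    ∀ α β : Ordinal,
      cbIter (toCantor '' F) (β + 1) = ∅ → cbIter (toCantor '' F) β ≠ ∅ →
      cbIter (toCantor '' G) (α + 1) = ∅ → cbIter (toCantor '' G) α ≠ ∅ →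
      cbIter (toCantor '' famComb F G) (α * β + 1) = ∅ ∧
        cbIter (toCantor '' famComb F G) (α * β) ≠ ∅ :=
  famComb_regular_and_CB_general F G hF hG
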